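/- Assume R is simply-laced. Let μ ∈ X be dominant and let β∨ be a positive coroot of the relative coroot system R' (i.e. β∨ = ρ(γ₀∨) for some positive coroot γ₀∨ of R) such that ν' := ρ(μ) − β∨ is dominant, meaning that the image of ν' in the σ-invariants of X⊗ℝ pairs nonnegatively with every simple root α_i. Then there exists an element ν ∈ 𝒫_μ such that ρ(ν) = ρ(μ) − β∨. -/

import Mathlib

/-!
Common setup: an abstract reduced irreducible crystallographic root system `R`
inside a real inner product space `E`, with simple roots `α i` (`i : ι`) forming
a basis of `E`, Weyl group generated by the reflections in the roots
(equivalently, by the simple reflections), coroot pairing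
`⟨x, a∨⟩ = 2 (x, a) / (a, a)`, weight lattice `P(R)`, root lattices `Q(R)`,
`Q(R_J)`, etc.
-/

open scoped BigOperators

noncomputable section

/-- the pairing `⟨x, a∨⟩ = 2 (x, a)/(a, a)` of `x` with the coroot of `a`. -/
def pairR {E : Type} [NormedAddCommGroup E] [InnerProductSpace ℝ E] (x a : E) : ℝ :=
  2 * (inner ℝ x a : ℝ) / (inner ℝ a a : ℝ)

/-- the reflection in (the hyperplane orthogonal to) `a`. -/
def reflFun {E : Type} [NormedAddCommGroup E] [InnerProductSpace ℝ E] (a : E) (x : E) : E :=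
  x - pairR x a • a

/-- A reduced irreducible crystallographic root system in a real inner product
space `E`, whose set of simple roots `simple : ι → E` is a basis of `E`. -/
structure RootSystemCtx (ι E : Type) [Fintype ι] [DecidableEq ι]
    [NormedAddCommGroup E] [InnerProductSpace ℝ E] : Type where
  Roots : Set E
  simple : ι → E
  simple_mem : ∀ i, simple i ∈ Roots
  finite : Roots.Finite
  ne_zero : ∀ a ∈ Roots, a ≠ 0
  reduced : ∀ a ∈ Roots, ∀ t : ℝ, t • a ∈ Roots → t = 1 ∨ t = -1
  crystal : ∀ a ∈ Roots, ∀ b ∈ Roots, ∃ n : ℤ, pairR a b = (n : ℝ)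
  refl_stable : ∀ a ∈ Roots, ∀ b ∈ Roots, reflFun b a ∈ Roots
  indep : LinearIndependent ℝ simple
  span_top : Submodule.span ℝ (Set.range simple) = ⊤
  pos_neg : ∀ a ∈ Roots, (∃ c : ι → ℕ, a = ∑ i, (c i : ℝ) • simple i) ∨
      (∃ c : ι → ℕ, a = -∑ i, (c i : ℝ) • simple i)
  irred : ∀ R1 R2 : Set E, Roots = R1 ∪ R2 →
      (∀ a ∈ R1, ∀ b ∈ R2, (inner ℝ a b : ℝ) = 0) → R1 = ∅ ∨ R2 = ∅

namespace RootSystemCtx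

variable {ι E : Type} [Fintype ι] [DecidableEq ι]
  [NormedAddCommGroup E] [InnerProductSpace ℝ E]
variable (S : RootSystemCtx ι E)

/-- `R` is simply laced: `⟨a, b∨⟩ ∈ {-1, 0, 1}` for roots `b ≠ ± a`. -/
def SimplyLaced : Prop :=
  ∀ a ∈ S.Roots, ∀ b ∈ S.Roots, b ≠ a → b ≠ -a →
    pairR a b = -1 ∨ pairR a b = 0 ∨ pairR a b = 1

/-- membership in the weight lattice `P(R)`. -/
def IsWeight (x : E) : Prop := ∀ a ∈ S.Roots, ∃ n : ℤ, pairR x a = (n : ℝ)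

/-- `x` is dominant: `⟨x, αᵢ∨⟩ ≥ 0` for all simple roots. -/
def IsDominant (x : E) : Prop := ∀ i, 0 ≤ pairR x (S.simple i)

/-- positive roots: roots that are nonnegative combinations of simple roots. -/
def IsPositiveRoot (a : E) : Prop :=
  a ∈ S.Roots ∧ ∃ c : ι → ℕ, a = ∑ i, (c i : ℝ) • S.simple i

/-- the root lattice `Q(R)`. -/
def rootLattice : AddSubgroup E := AddSubgroup.closure S.Roots

/-- the root lattice `Q(R_J)` of the sub-root system `R_J`. -/
def rootLatticeJ (J : Finset ι) : AddSubgroup E :=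
  AddSubgroup.closure (S.simple '' ↑J)

/-- the sub-root system `R_J` determined by the simple roots `α_j`, `j ∈ J`. -/
def RootsJ (J : Finset ι) : Set E :=
  {a | a ∈ S.Roots ∧ a ∈ Submodule.span ℝ (S.simple '' ↑J)}

/-- `x` is `J`-dominant. -/
def IsJDominant (J : Finset ι) (x : E) : Prop := ∀ j ∈ J, 0 ≤ pairR x (S.simple j)

/-- `x` is `J`-minuscule: `⟨x, a∨⟩ ∈ {-1,0,1}` for all `a ∈ R_J`. -/
def IsJMinuscule (J : Finset ι) (x : E) : Prop :=
  ∀ a ∈ S.RootsJ J, pairR x a = -1 ∨ pairR x a = 0 ∨ pairR x a = 1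

/-- the action of a word `[i₁, …, i_t]` of simple reflections:
`s_{i₁} ∘ ⋯ ∘ s_{i_t}`. -/
def wordAct (l : List ι) : E → E :=
  l.foldr (fun i f => reflFun (S.simple i) ∘ f) id

/-- membership in the Weyl group `W` (generated by the simple reflections). -/
def InWeyl (w : E → E) : Prop := ∃ l : List ι, S.wordAct l = w

/-- the Weyl group orbit `W x`. -/
def weylOrbit (x : E) : Set E := {y | ∃ l : List ι, y = S.wordAct l x}

/-- a word is reduced if no shorter word gives the same Weyl group element. -/
def IsReducedWord (l : List ι) : Prop :=
  ∀ l' : List ι, S.wordAct l' = S.wordAct l → l.length ≤ l'.length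

/-- `w ∈ W` is `λ`-minuscule: some (equivalently, any) reduced expression
`w = s_{i₁} ⋯ s_{i_t}` satisfies
`⟨s_{i_{r+1}} ⋯ s_{i_t} λ, α_{i_r}∨⟩ = -1` for all `1 ≤ r ≤ t`. -/
def IsMinusculeFor (lam : E) (w : E → E) : Prop :=
  ∃ l : List ι, S.wordAct l = w ∧ S.IsReducedWord l ∧
    ∀ r : Fin l.length,
      pairR (S.wordAct (l.drop (r + 1)) lam) (S.simple (l.get r)) = -1

/-- the basis of simple roots. -/
def simpleBasis : Module.Basis ι ℝ E := Module.Basis.mk S.indep S.span_top.ge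

/-- `⟨x, ωᵢ⟩`: the pairing with the fundamental coweight `ωᵢ` dual to `αᵢ`,
i.e. the `i`-th coordinate of `x` in the basis of simple roots. -/
def coweightPair (x : E) (i : ι) : ℝ := S.simpleBasis.repr x i

end RootSystemCtx

/-!
Quasi-split setup: `X` is the cocharacter lattice of a root datum with reduced
root system `R = S.Roots`; since `E` is self-dual via the inner product, roots
and coroots both live in `E` and the pairing `⟨α, x⟩` of a root `α` with a
cocharacter `x` is the inner product. `σ` is a finite-order linear isometry of
`E` preserving `X` and permuting the simple roots (via a permutation `π` of
the index set). `Y = X/(1-σ)X` with projection `ρ`, and `Y ⊗ ℝ` is identified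
with the `σ`-invariants of `X ⊗ ℝ` via averaging over `⟨σ⟩`; accordingly
`ρ(x) = ρ(x')` iff `x - x' ∈ (1-σ)X = {u - σu : u ∈ X}`, and the image of
`ρ(x)` in the invariants is `avg x = n⁻¹ ∑_{k<n} σᵏ x`. The relative Weyl
group `W'` is the subgroup of `σ`-fixed elements of `W` (those commuting with
`σ`). -/

/-- the coroot `a∨ = 2a/(a,a)` of `a`. -/
def corootOf {E : Type} [NormedAddCommGroup E] [InnerProductSpace ℝ E] (a : E) : E :=
  (2 / (inner ℝ a a : ℝ)) • a

/-- the averaging map over `⟨σ⟩` (for `σ` of order dividing `n`), realizing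
the identification of `Y ⊗ ℝ` (resp. `Y_M ⊗ ℝ`) with `σ`-invariants. -/
def avgOf {E : Type} [NormedAddCommGroup E] [InnerProductSpace ℝ E]
    (σ : E ≃ₗᵢ[ℝ] E) (n : ℕ) (x : E) : E :=
  (n : ℝ)⁻¹ • ∑ k ∈ Finset.range n, (σ ^ k) x

/-- `𝔞_P`: the subspace of `σ`-invariant vectors annihilated by every simple
root `α_j`, `j ∈ J`. -/
def aPsub {ι E : Type} [Fintype ι] [DecidableEq ι]
    [NormedAddCommGroup E] [InnerProductSpace ℝ E]
    (S : RootSystemCtx ι E) (σ : E ≃ₗᵢ[ℝ] E) (J : Finset ι) : Submodule ℝ E where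
  carrier := {v : E | σ v = v ∧ ∀ j ∈ J, (inner ℝ (S.simple j) v : ℝ) = 0}
  add_mem' := by
    rintro a b ⟨ha1, ha2⟩ ⟨hb1, hb2⟩
    refine ⟨by rw [map_add, ha1, hb1], fun j hj => ?_⟩
    rw [inner_add_right, ha2 j hj, hb2 j hj, add_zero]
  zero_mem' := by
    refine ⟨map_zero σ, fun j hj => ?_⟩
    simp
  smul_mem' := by
    rintro c a ⟨ha1, ha2⟩
    refine ⟨by rw [map_smul, ha1], fun j hj => ?_⟩
    rw [inner_smul_right, ha2 j hj, mul_zero]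

/-!
Averaging over `⟨σ⟩` preserves the height, so `avg γ₀ ≠ 0` and
`⟨γ₀, avg γ₀∨⟩ = (2 / |γ₀|²) ‖avg γ₀‖² > 0`. Dominance of `avg (μ - γ₀∨)` therefore gives
`⟨avg γ₀, μ⟩ = ⟨γ₀, avg μ⟩ > 0`, so `⟨σᵏ γ₀, μ⟩` is a positive integer, hence `≥ 1`, for some `k`.
Take `ν = μ - γ∨` with `γ = σᵏ γ₀`: it lies on the segment from `μ` to `s_γ μ`, and `s_γ ∈ W`
because `γ₀`, hence also `γ`, is `W`-conjugate to a simple root. Finally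
`ν - (μ - γ₀∨) = γ₀∨ - σᵏ γ₀∨` lies in `(1 - σ) X` by telescoping.
-/

lemma one_le_of_eq_intCast {x : ℝ} {m : ℤ} (h : x = m) (hx : 0 < x) : 1 ≤ x :=
  h ▸ Int.cast_one_le_of_pos (Int.cast_pos.mp (h ▸ hx))

section Reflections

variable {E : Type} [NormedAddCommGroup E] [InnerProductSpace ℝ E]

lemma pairR_sub_smul (x a b : E) (t : ℝ) :
    pairR (x - t • a) b = pairR x b - t * pairR a b := by
  unfold pairR
  rw [inner_sub_left, real_inner_smul_left]
  ring

lemma pairR_self {a : E} (ha : a ≠ 0) : pairR a a = 2 := by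
  have : (inner ℝ a a : ℝ) ≠ 0 := inner_self_ne_zero.mpr ha
  unfold pairR
  field_simp

lemma reflFun_sub_smul (a x y : E) (t : ℝ) :
    reflFun a (x - t • y) = reflFun a x - t • reflFun a y := by
  unfold reflFun
  rw [pairR_sub_smul]
  module

lemma reflFun_reflFun {a : E} (ha : a ≠ 0) (x : E) : reflFun a (reflFun a x) = x := by
  unfold reflFun
  rw [pairR_sub_smul, pairR_self ha]
  module

lemma inner_reflFun_reflFun {a : E} (ha : a ≠ 0) (x y : E) :
    inner ℝ (reflFun a x) (reflFun a y) = inner ℝ x y := by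
  have : (inner ℝ a a : ℝ) ≠ 0 := inner_self_ne_zero.mpr ha
  unfold reflFun pairR
  simp only [inner_sub_left, inner_sub_right, real_inner_smul_left, real_inner_smul_right,
    real_inner_comm a x, real_inner_comm a y]
  field_simp
  ring

lemma LinearIsometryEquiv.map_reflFun (f : E ≃ₗᵢ[ℝ] E) (a x : E) :
    f (reflFun a x) = reflFun (f a) (f x) := by
  unfold reflFun pairR
  rw [f.inner_map_map, f.inner_map_map, map_sub, map_smul]

lemma LinearIsometryEquiv.map_corootOf (f : E ≃ₗᵢ[ℝ] E) (a : E) :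
    f (corootOf a) = corootOf (f a) := by
  unfold corootOf
  rw [f.inner_map_map, map_smul]

lemma reflFun_eq_sub_inner_smul_corootOf (a x : E) :
    reflFun a x = x - inner ℝ a x • corootOf a := by
  unfold reflFun pairR corootOf
  rw [smul_smul, real_inner_comm]
  ring_nf

lemma sub_corootOf_mem_segment {a x : E} (h : 1 ≤ inner ℝ a x) :
    x - corootOf a ∈ segment ℝ x (reflFun a x) := by
  have hne : (inner ℝ a x : ℝ) ≠ 0 := by positivity
  refine ⟨1 - (inner ℝ a x)⁻¹, (inner ℝ a x)⁻¹, by simpa using inv_le_one_of_one_le₀ h,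
    by positivity, by ring, ?_⟩
  rw [reflFun_eq_sub_inner_smul_corootOf, smul_sub, smul_smul, inv_mul_cancel₀ hne]
  module

end Reflections

namespace LinearIsometryEquiv

variable {E : Type} [NormedAddCommGroup E] [InnerProductSpace ℝ E] (σ : E ≃ₗᵢ[ℝ] E)

lemma pow_succ_apply (k : ℕ) (x : E) : (σ ^ (k + 1)) x = σ ((σ ^ k) x) := by
  rw [pow_succ']
  rfl

lemma pow_apply_eq_self_of_apply_eq_self {x : E} (hx : σ x = x) (k : ℕ) : (σ ^ k) x = x := by
  induction k with
  | zero => rfl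
  | succ k ih => rw [pow_succ_apply, ih, hx]

lemma pow_apply_mem {X : AddSubgroup E} (hσX : ∀ x ∈ X, σ x ∈ X) (k : ℕ) {x : E} (hx : x ∈ X) :
    (σ ^ k) x ∈ X := by
  induction k with
  | zero => exact hx
  | succ k ih => rw [pow_succ_apply]; exact hσX _ ih

lemma pow_apply_eq_apply_iterate {ι : Type} {v : ι → E} {π : ι → ι} (hσ : ∀ i, σ (v i) = v (π i))
    (k : ℕ) (i : ι) : (σ ^ k) (v i) = v (π^[k] i) := by
  induction k with
  | zero => rfl
  | succ k ih => rw [pow_succ_apply, ih, hσ, Function.iterate_succ_apply']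

lemma exists_sub_apply_eq_sub_pow_apply {X : AddSubgroup E} (hσX : ∀ x ∈ X, σ x ∈ X)
    {x : E} (hx : x ∈ X) (k : ℕ) : ∃ u ∈ X, x - (σ ^ k) x = u - σ u := by
  refine ⟨∑ j ∈ Finset.range k, (σ ^ j) x,
    X.sum_mem fun j _ => σ.pow_apply_mem hσX j hx, ?_⟩
  rw [map_sum, ← Finset.sum_sub_distrib]
  simp_rw [← pow_succ_apply]
  exact (Finset.sum_range_sub' (fun j => (σ ^ j) x) k).symm

end LinearIsometryEquiv

section Averaging

variable {E : Type} [NormedAddCommGroup E] [InnerProductSpace ℝ E] (σ : E ≃ₗᵢ[ℝ] E) (n : ℕ)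

lemma avgOf_sub (x y : E) : avgOf σ n (x - y) = avgOf σ n x - avgOf σ n y := by
  simp only [avgOf, map_sub, Finset.sum_sub_distrib, smul_sub]

lemma avgOf_smul (t : ℝ) (x : E) : avgOf σ n (t • x) = t • avgOf σ n x := by
  simp only [avgOf, map_smul, ← Finset.smul_sum]
  rw [smul_comm]

lemma map_avgOf (hσn : σ ^ n = 1) (x : E) : σ (avgOf σ n x) = avgOf σ n x := by
  rw [avgOf, map_smul, map_sum]
  simp_rw [← σ.pow_succ_apply]
  congr 1
  have := Finset.sum_range_succ' (fun k => (σ ^ k) x) n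
  rw [Finset.sum_range_succ, hσn, pow_zero] at this
  exact add_right_cancel this.symm

lemma inner_avgOf_of_apply_eq_self (hn : 0 < n) {w : E} (hw : σ w = w) (x : E) :
    inner ℝ (avgOf σ n x) w = inner ℝ x w := by
  have hterm : ∀ k, inner ℝ ((σ ^ k) x) w = inner ℝ x w := fun k => by
    conv_lhs => rw [← σ.pow_apply_eq_self_of_apply_eq_self hw k]
    exact (σ ^ k).inner_map_map x w
  have : (n : ℝ) ≠ 0 := by positivity
  rw [avgOf, real_inner_smul_left, sum_inner, Finset.sum_congr rfl fun k _ => hterm k,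
    Finset.sum_const, Finset.card_range, nsmul_eq_mul, inv_mul_cancel_left₀ this]

lemma inner_avgOf_comm (hn : 0 < n) (hσn : σ ^ n = 1) (x y : E) :
    inner ℝ (avgOf σ n x) y = inner ℝ x (avgOf σ n y) := by
  calc inner ℝ (avgOf σ n x) y = inner ℝ (avgOf σ n y) (avgOf σ n x) := by
        rw [real_inner_comm, inner_avgOf_of_apply_eq_self σ n hn (map_avgOf σ n hσn x)]
    _ = inner ℝ x (avgOf σ n y) := by
        rw [real_inner_comm, inner_avgOf_of_apply_eq_self σ n hn (map_avgOf σ n hσn y)]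

lemma exists_inner_pow_pos_of_inner_avgOf_pos {x y : E} (h : 0 < inner ℝ (avgOf σ n x) y) :
    ∃ k, 0 < inner ℝ ((σ ^ k) x) y := by
  by_contra! hk
  refine h.not_ge ?_
  rw [avgOf, real_inner_smul_left, sum_inner]
  exact mul_nonpos_of_nonneg_of_nonpos (by positivity) (Finset.sum_nonpos fun k _ => hk k)

end Averaging

namespace RootSystemCtx

variable {ι E : Type} [Fintype ι] [DecidableEq ι] [NormedAddCommGroup E] [InnerProductSpace ℝ E]
  (S : RootSystemCtx ι E)

lemma simple_ne_zero (i : ι) : S.simple i ≠ 0 := S.ne_zero _ (S.simple_mem i)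

lemma wordAct_cons (i : ι) (l : List ι) (x : E) :
    S.wordAct (i :: l) x = reflFun (S.simple i) (S.wordAct l x) := rfl

lemma wordAct_append (l₁ l₂ : List ι) (x : E) :
    S.wordAct (l₁ ++ l₂) x = S.wordAct l₁ (S.wordAct l₂ x) := by
  induction l₁ with
  | nil => rfl
  | cons i l ih => rw [List.cons_append, wordAct_cons, ih, wordAct_cons]

lemma wordAct_sub_smul (l : List ι) (x y : E) (t : ℝ) :
    S.wordAct l (x - t • y) = S.wordAct l x - t • S.wordAct l y := by
  induction l with
  | nil => rfl
  | cons i l ih => rw [wordAct_cons, ih, reflFun_sub_smul, wordAct_cons, wordAct_cons]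

lemma inner_wordAct_wordAct (l : List ι) (x y : E) :
    inner ℝ (S.wordAct l x) (S.wordAct l y) = inner ℝ x y := by
  induction l with
  | nil => rfl
  | cons i l ih => rw [wordAct_cons, wordAct_cons, inner_reflFun_reflFun (S.simple_ne_zero i), ih]

lemma wordAct_wordAct_reverse (l : List ι) (x : E) :
    S.wordAct l (S.wordAct l.reverse x) = x := by
  induction l generalizing x with
  | nil => rfl
  | cons i l ih =>
    rw [List.reverse_cons, wordAct_append, wordAct_cons, wordAct_cons, ih,
      reflFun_reflFun (S.simple_ne_zero i)]
    rfl

lemma reflFun_wordAct (l : List ι) (a x : E) :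
    reflFun (S.wordAct l a) (S.wordAct l x) = S.wordAct l (reflFun a x) := by
  unfold reflFun pairR
  rw [inner_wordAct_wordAct, inner_wordAct_wordAct, wordAct_sub_smul]

lemma reflFun_wordAct_simple (l : List ι) (j : ι) (x : E) :
    reflFun (S.wordAct l (S.simple j)) x = S.wordAct (l ++ j :: l.reverse) x := by
  conv_lhs => rw [← S.wordAct_wordAct_reverse l x]
  rw [reflFun_wordAct, wordAct_append, wordAct_cons]

lemma wordAct_mem_roots {a : E} (ha : a ∈ S.Roots) (l : List ι) : S.wordAct l a ∈ S.Roots := by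
  induction l with
  | nil => exact ha
  | cons i l ih => exact S.refl_stable _ ih _ (S.simple_mem i)

lemma map_wordAct (f : E ≃ₗᵢ[ℝ] E) {π : ι → ι}
    (hf : ∀ i, f (S.simple i) = S.simple (π i)) (l : List ι) (x : E) :
    f (S.wordAct l x) = S.wordAct (l.map π) (f x) := by
  induction l with
  | nil => rfl
  | cons i l ih => rw [wordAct_cons, f.map_reflFun, ih, hf, List.map_cons, wordAct_cons]

lemma simpleBasis_apply (i : ι) : S.simpleBasis i = S.simple i := Module.Basis.mk_apply _ _ _

lemma coord_simple (i j : ι) : S.simpleBasis.coord j (S.simple i) = if i = j then 1 else 0 := by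
  rw [← simpleBasis_apply, Module.Basis.coord_apply, Module.Basis.repr_self, Finsupp.single_apply]

lemma coord_sum_smul_simple (c : ι → ℝ) (j : ι) :
    S.simpleBasis.coord j (∑ i, c i • S.simple i) = c j := by
  simp only [map_sum, map_smul, coord_simple, smul_eq_mul, mul_ite, mul_one, mul_zero,
    Finset.sum_ite_eq', Finset.mem_univ, if_true]

def height : Module.Dual ℝ E := ∑ i, S.simpleBasis.coord i

lemma height_sum_smul_simple (c : ι → ℝ) : S.height (∑ i, c i • S.simple i) = ∑ i, c i := by
  simp only [height, LinearMap.sum_apply, coord_sum_smul_simple]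

lemma height_simple (j : ι) : S.height (S.simple j) = 1 := by
  simp only [height, LinearMap.sum_apply, coord_simple, Finset.sum_ite_eq, Finset.mem_univ,
    if_true]

lemma height_map (f : E ≃ₗᵢ[ℝ] E) {π : ι → ι} (hf : ∀ i, f (S.simple i) = S.simple (π i))
    (x : E) : S.height (f x) = S.height x := by
  have : S.height ∘ₗ f.toLinearEquiv.toLinearMap = S.height :=
    S.simpleBasis.ext fun i => by simp [simpleBasis_apply, hf, height_simple]
  exact LinearMap.congr_fun this x

lemma inner_nonneg_of_isPositiveRoot {γ x : E} (hγ : S.IsPositiveRoot γ)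
    (hx : ∀ i, 0 ≤ inner ℝ (S.simple i) x) : 0 ≤ inner ℝ γ x := by
  obtain ⟨-, c, rfl⟩ := hγ
  rw [sum_inner]
  exact Finset.sum_nonneg fun i _ => by
    rw [real_inner_smul_left]
    exact mul_nonneg (Nat.cast_nonneg _) (hx i)

lemma exists_inner_simple_pos {γ : E} (hγ : S.IsPositiveRoot γ) :
    ∃ i, 0 < inner ℝ (S.simple i) γ := by
  by_contra! h
  have := S.inner_nonneg_of_isPositiveRoot hγ (x := -γ) fun i => by
    rw [inner_neg_right]
    linarith [h i]
  rw [inner_neg_right, neg_nonneg] at this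
  exact S.ne_zero γ hγ.1 (real_inner_self_nonpos.mp this)

lemma height_pos {γ : E} (hγ : S.IsPositiveRoot γ) : 0 < S.height γ := by
  obtain ⟨hγR, c, hc⟩ := hγ
  have hc0 : ∀ i ∈ Finset.univ, (0 : ℝ) ≤ c i := fun i _ => Nat.cast_nonneg (c i)
  rw [hc, height_sum_smul_simple]
  refine (Finset.sum_nonneg hc0).lt_of_ne fun h => S.ne_zero γ hγR ?_
  rw [hc]
  exact Finset.sum_eq_zero fun i hi => by
    rw [(Finset.sum_eq_zero_iff_of_nonneg hc0).mp h.symm i hi, zero_smul]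

lemma eq_simple_of_eq_smul_simple {γ : E} (hγ : γ ∈ S.Roots) {i : ι} {t : ℝ} (ht : 0 ≤ t)
    (h : γ = t • S.simple i) : γ = S.simple i := by
  rcases S.reduced _ (S.simple_mem i) t (h ▸ hγ) with rfl | rfl
  · rw [h, one_smul]
  · norm_num at ht

lemma eq_simple_of_sub_smul_simple_eq_neg {γ : E} (hγ : S.IsPositiveRoot γ) {i : ι} {t : ℝ}
    {d : ι → ℕ} (h : γ - t • S.simple i = -∑ j, (d j : ℝ) • S.simple j) : γ = S.simple i := by
  obtain ⟨hγR, c, hc⟩ := hγ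
  have hc0 : ∀ j ≠ i, c j = 0 := by
    intro j hj
    have hj' := congrArg (S.simpleBasis.coord j) h
    rw [map_sub, map_smul, map_neg, hc, coord_sum_smul_simple, coord_simple,
      coord_sum_smul_simple, if_neg (Ne.symm hj), smul_zero, sub_zero] at hj'
    have : ((c j + d j : ℕ) : ℝ) = 0 := by push_cast; linarith
    exact Nat.eq_zero_of_add_eq_zero_right (Nat.cast_eq_zero.mp this)
  refine S.eq_simple_of_eq_smul_simple hγR (Nat.cast_nonneg (c i)) ?_
  rw [hc, Finset.sum_eq_single i (fun j _ hj => by rw [hc0 j hj, Nat.cast_zero, zero_smul])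
    (by simp)]

lemma exists_reflFun_simple_eq_sum_lt {γ : E} (hγ : S.IsPositiveRoot γ)
    (hne : ∀ j, γ ≠ S.simple j) {c : ι → ℕ} (hc : γ = ∑ i, (c i : ℝ) • S.simple i) :
    ∃ i, ∃ d : ι → ℕ,
      reflFun (S.simple i) γ = ∑ j, (d j : ℝ) • S.simple j ∧ ∑ j, d j < ∑ j, c j := by
  obtain ⟨i, hi⟩ := S.exists_inner_simple_pos hγ
  obtain ⟨m, hm⟩ := S.crystal γ hγ.1 _ (S.simple_mem i)
  have hm1 : (1 : ℝ) ≤ m := by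
    refine hm ▸ one_le_of_eq_intCast hm ?_
    rw [pairR, real_inner_comm]
    exact div_pos (by linarith) (real_inner_self_pos.mpr (S.simple_ne_zero i))
  have hrefl : reflFun (S.simple i) γ = γ - (m : ℝ) • S.simple i := by rw [reflFun, hm]
  rcases S.pos_neg _ (S.refl_stable γ hγ.1 _ (S.simple_mem i)) with ⟨d, hd⟩ | ⟨d, hd⟩
  · refine ⟨i, d, hd, ?_⟩
    have := congrArg S.height (hrefl.symm.trans hd)
    rw [map_sub, map_smul, height_simple, smul_eq_mul, mul_one, hc, height_sum_smul_simple,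
      height_sum_smul_simple] at this
    exact_mod_cast (show ((∑ j, d j : ℕ) : ℝ) < ((∑ j, c j : ℕ) : ℝ) by push_cast; linarith)
  · exact absurd (S.eq_simple_of_sub_smul_simple_eq_neg hγ (hrefl ▸ hd)) (hne i)

theorem exists_eq_wordAct_simple {γ : E} (hγ : S.IsPositiveRoot γ) :
    ∃ (l : List ι) (j : ι), γ = S.wordAct l (S.simple j) := by
  obtain ⟨c, hc⟩ := hγ.2
  induction hN : ∑ i, c i using Nat.strong_induction_on generalizing γ c with
  | _ N ih =>
    by_cases hsimple : ∀ j, γ ≠ S.simple j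
    · obtain ⟨i, d, hd, hlt⟩ := S.exists_reflFun_simple_eq_sum_lt hγ hsimple hc
      obtain ⟨l, j, hl⟩ :=
        ih _ (hN ▸ hlt) ⟨S.refl_stable _ hγ.1 _ (S.simple_mem i), d, hd⟩ d hd rfl
      exact ⟨i :: l, j, by rw [wordAct_cons, ← hl, reflFun_reflFun (S.simple_ne_zero i)]⟩
    · obtain ⟨j, hj⟩ := not_forall_not.mp hsimple
      exact ⟨[], j, hj⟩

lemma exists_map_eq_wordAct_simple (f : E ≃ₗᵢ[ℝ] E) {π : ι → ι}
    (hf : ∀ i, f (S.simple i) = S.simple (π i)) {γ : E} (hγ : S.IsPositiveRoot γ) :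
    ∃ (l : List ι) (j : ι), f γ = S.wordAct l (S.simple j) := by
  obtain ⟨l, j, rfl⟩ := S.exists_eq_wordAct_simple hγ
  exact ⟨l.map π, π j, by rw [S.map_wordAct f hf, hf]⟩

lemma height_avgOf (σ : E ≃ₗᵢ[ℝ] E) {π : ι → ι} (hσ : ∀ i, σ (S.simple i) = S.simple (π i))
    {n : ℕ} (hn : 0 < n) (x : E) :
    S.height (avgOf σ n x) = S.height x := by
  have : (n : ℝ) ≠ 0 := by positivity
  rw [avgOf, map_smul, map_sum,
    Finset.sum_congr rfl fun k _ => S.height_map _ (σ.pow_apply_eq_apply_iterate hσ k) x,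
    Finset.sum_const, Finset.card_range, nsmul_eq_mul, smul_eq_mul, inv_mul_cancel_left₀ this]

lemma inner_avgOf_pos_of_dominant_sub_corootOf (σ : E ≃ₗᵢ[ℝ] E) {π : ι → ι}
    (hσ : ∀ i, σ (S.simple i) = S.simple (π i)) {n : ℕ} (hn : 0 < n)
    (hσn : σ ^ n = 1) {γ μ : E} (hγ : S.IsPositiveRoot γ)
    (hdom : ∀ i, 0 ≤ inner ℝ (S.simple i) (avgOf σ n (μ - corootOf γ))) :
    0 < inner ℝ (avgOf σ n γ) μ := by
  have hAγ : avgOf σ n γ ≠ 0 := fun h =>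
    (S.height_pos hγ).ne' (by rw [← S.height_avgOf σ hσ hn, h, map_zero])
  have hγγ : 0 < inner ℝ γ γ := real_inner_self_pos.mpr (S.ne_zero γ hγ.1)
  have hcoroot : 0 < inner ℝ γ (avgOf σ n (corootOf γ)) := by
    rw [corootOf, avgOf_smul, real_inner_smul_right,
      ← inner_avgOf_of_apply_eq_self σ n hn (map_avgOf σ n hσn γ) γ]
    exact mul_pos (by positivity) (real_inner_self_pos.mpr hAγ)
  have hsub := S.inner_nonneg_of_isPositiveRoot hγ hdom
  rw [avgOf_sub, inner_sub_right] at hsub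
  rw [inner_avgOf_comm σ n hn hσn]
  linarith

end RootSystemCtx

theorem exists_nu_in_P_mu_lifting_general
    {ι E : Type} [Fintype ι] [DecidableEq ι]
    [NormedAddCommGroup E] [InnerProductSpace ℝ E]
    (S : RootSystemCtx ι E)
    (X : AddSubgroup E)
    (hXcor : ∀ a ∈ S.Roots, corootOf a ∈ X)
    (hXint : ∀ a ∈ S.Roots, ∀ x ∈ X, ∃ m : ℤ, (inner ℝ a x : ℝ) = m)
    (σ : E ≃ₗᵢ[ℝ] E) (n : ℕ) (hn : 0 < n) (hσn : σ ^ n = 1)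
    (hσX : ∀ x ∈ X, σ x ∈ X)
    (π : Equiv.Perm ι) (hσsimple : ∀ i, σ (S.simple i) = S.simple (π i))
    (μ : E) (hμX : μ ∈ X)
    (γ₀ : E) (hγ₀ : S.IsPositiveRoot γ₀)
    (hν'dom : ∀ i : ι, 0 ≤ (inner ℝ (S.simple i) (avgOf σ n (μ - corootOf γ₀)) : ℝ)) :
    ∃ ν : E, ν ∈ X ∧
      ν - μ ∈ AddSubgroup.closure {v : E | ∃ a ∈ S.Roots, v = corootOf a} ∧
      ν ∈ convexHull ℝ (S.weylOrbit μ) ∧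
      ∃ u ∈ X, ν - (μ - corootOf γ₀) = u - σ u := by
  obtain ⟨k, hk⟩ := exists_inner_pow_pos_of_inner_avgOf_pos σ n
    (S.inner_avgOf_pos_of_dominant_sub_corootOf σ hσsimple hn hσn hγ₀ hν'dom)
  obtain ⟨l, j, hγ⟩ :=
    S.exists_map_eq_wordAct_simple (σ ^ k) (σ.pow_apply_eq_apply_iterate hσsimple k) hγ₀
  set γ := (σ ^ k) γ₀
  have hγR : γ ∈ S.Roots := hγ ▸ S.wordAct_mem_roots (S.simple_mem j) l
  obtain ⟨m, hm⟩ := hXint γ hγR μ hμX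
  refine ⟨μ - corootOf γ, X.sub_mem hμX (hXcor γ hγR), ?_, ?_, ?_⟩
  · rw [sub_sub_cancel_left]
    exact neg_mem (AddSubgroup.subset_closure ⟨γ, hγR, rfl⟩)
  · have hreflγ : reflFun γ μ ∈ S.weylOrbit μ :=
      ⟨l ++ j :: l.reverse, by rw [hγ, S.reflFun_wordAct_simple]⟩
    exact segment_subset_convexHull (s := S.weylOrbit μ) ⟨[], rfl⟩ hreflγ
      (sub_corootOf_mem_segment (one_le_of_eq_intCast hm hk))
  · rw [← LinearIsometryEquiv.map_corootOf, sub_sub_sub_cancel_left]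
    exact σ.exists_sub_apply_eq_sub_pow_apply hσX (hXcor γ₀ hγ₀.1) k

/-- (quasi-split, `R` simply-laced) Let `μ ∈ X` be dominant
and let `β∨ = ρ(γ₀∨)` be a positive coroot of the relative coroot system `R'`
(`γ₀` a positive coroot of `R`) such that `ν' = ρ(μ) - β∨` is dominant, i.e.
its image `avg(μ - γ₀∨)` in the `σ`-invariants of `X ⊗ ℝ` pairs nonnegatively
with every simple root. Then there exists `ν ∈ 𝒫_μ` with
`ρ(ν) = ρ(μ) - β∨`, i.e. `ν - (μ - γ₀∨) ∈ (1-σ)X`. -/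
theorem exists_nu_in_P_mu_lifting
    {ι E : Type} [Fintype ι] [DecidableEq ι]
    [NormedAddCommGroup E] [InnerProductSpace ℝ E]
    (S : RootSystemCtx ι E) (hSL : S.SimplyLaced)
    (X : AddSubgroup E)
    (hXcor : ∀ a ∈ S.Roots, corootOf a ∈ X)
    (hXint : ∀ a ∈ S.Roots, ∀ x ∈ X, ∃ m : ℤ, (inner ℝ a x : ℝ) = m)
    (σ : E ≃ₗᵢ[ℝ] E) (n : ℕ) (hn : 0 < n) (hσn : σ ^ n = 1)
    (hσX : ∀ x ∈ X, σ x ∈ X)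
    (π : Equiv.Perm ι) (hσsimple : ∀ i, σ (S.simple i) = S.simple (π i))
    (μ : E) (hμX : μ ∈ X) (hμdom : ∀ i : ι, 0 ≤ (inner ℝ (S.simple i) μ : ℝ))
    (γ₀ : E) (hγ₀ : S.IsPositiveRoot γ₀)
    (hν'dom : ∀ i : ι, 0 ≤ (inner ℝ (S.simple i) (avgOf σ n (μ - corootOf γ₀)) : ℝ)) :
    ∃ ν : E, ν ∈ X ∧
      ν - μ ∈ AddSubgroup.closure {v : E | ∃ a ∈ S.Roots, v = corootOf a} ∧
      ν ∈ convexHull ℝ (S.weylOrbit μ) ∧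
      ∃ u ∈ X, ν - (μ - corootOf γ₀) = u - σ u :=
  exists_nu_in_P_mu_lifting_general S X hXcor hXint σ n hn hσn hσX π hσsimple μ hμX γ₀ hγ₀ hν'dom
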